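/- Minimizing L'_θ over classifiers is equivalent to maximizing the policy value U_θ: for any classifier f, E[Y(f(X))] - 2θ·P(f(X) = 1) = (1/2)E[Y(+1) + Y(-1)] - θ - (1/2)·L'_θ(f), where L'_θ(f) = E[f(X)(2θ - YT/Q)]. -/

import Mathlib

/-!
Because `f(X) = ±1`, the policy value `E[Y(f(X))]` and `P(f(X) = 1)` are affine in `E[f(X)]`,
`E[f(X) Y(+1)]` and `E[f(X) Y(-1)]`. So is the loss, once the inverse-propensity identities
`E[f(X) Y(+1) 1{T = 1} / e(X)] = E[f(X) Y(+1)]` and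
`E[f(X) Y(-1) 1{T = -1} / (1 - e(X))] = E[f(X) Y(-1)]` are known. For these, pull the
`σ(X)`-measurable factor `f(X) / e(X)` out of the conditional expectation, and use
unconfoundedness in the form `E[Y(+1) 1{T = 1} | X] = E[Y(+1) | X] e(X)`, which holds because
`Y(+1) = ±1` is an affine function of an indicator. Since `1 / e(X)` need not be bounded,
integrability comes from `E[1{T = 1} / e(X)] = 1`: on `σ(X)`, the restriction of `μ` to `{T = 1}`
has density `e(X)` with respect to `μ`.
-/

open MeasureTheory ProbabilityTheory

section

variable {Ω : Type*} {m mΩ : MeasurableSpace Ω} {μ : Measure Ω}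

theorem lintegral_indicator_inv_condExp [IsFiniteMeasure μ] (hm : m ≤ mΩ) {B : Set Ω}
    (hB : MeasurableSet B) {e : Ω → ℝ} (he : Measurable[m] e) (he0 : ∀ ω, 0 < e ω)
    (heB : e =ᵐ[μ] μ[B.indicator 1 | m]) :
    ∫⁻ ω, B.indicator (fun ω => ENNReal.ofReal (e ω)⁻¹) ω ∂μ = μ Set.univ := by
  have he_int : Integrable e μ := integrable_condExp.congr heB.symm
  have he_inv : Measurable[m] fun ω => ENNReal.ofReal (e ω)⁻¹ := he.inv.ennreal_ofReal
  have hdens : (μ.restrict B).trim hm = (μ.trim hm).withDensity fun ω => ENNReal.ofReal (e ω) := by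
    refine @Measure.ext _ m _ _ fun s hs => ?_
    rw [trim_measurableSet_eq hm hs, withDensity_apply _ hs, Measure.restrict_apply (hm s hs),
      setLIntegral_trim hm he.ennreal_ofReal hs,
      ← ofReal_integral_eq_lintegral_ofReal he_int.integrableOn
        (.of_forall fun ω => (he0 ω).le),
      setIntegral_congr_ae (hm s hs) (heB.mono fun ω h _ => h),
      setIntegral_condExp hm ((integrable_const 1).indicator hB) hs,
      integral_indicator hB, Measure.restrict_restrict hB]
    simp [Set.inter_comm]
  calc ∫⁻ ω, B.indicator (fun ω => ENNReal.ofReal (e ω)⁻¹) ω ∂μ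
      = ∫⁻ ω, ENNReal.ofReal (e ω)⁻¹ ∂(μ.restrict B).trim hm := by
        rw [lintegral_indicator hB, lintegral_trim hm he_inv]
    _ = ∫⁻ ω, ENNReal.ofReal (e ω) * ENNReal.ofReal (e ω)⁻¹ ∂μ.trim hm := by
        rw [hdens, lintegral_withDensity_eq_lintegral_mul _ he.ennreal_ofReal he_inv]
        rfl
    _ = μ Set.univ := by
        simp_rw [← ENNReal.ofReal_mul (he0 _).le, mul_inv_cancel₀ (he0 _).ne']
        simp [trim_measurableSet_eq hm MeasurableSet.univ]

theorem integrable_indicator_inv_condExp [IsFiniteMeasure μ] (hm : m ≤ mΩ) {B : Set Ω}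
    (hB : MeasurableSet B) {e : Ω → ℝ} (he : Measurable[m] e) (he0 : ∀ ω, 0 < e ω)
    (heB : e =ᵐ[μ] μ[B.indicator 1 | m]) :
    Integrable (B.indicator fun ω => (e ω)⁻¹) μ := by
  refine (integrable_toReal_of_lintegral_ne_top
    ((he.mono hm le_rfl).inv.ennreal_ofReal.indicator hB).aemeasurable
    ((lintegral_indicator_inv_condExp hm hB he he0 heB).trans_ne (measure_ne_top μ _))).congr
    (.of_forall fun ω => ?_)
  by_cases hω : ω ∈ B <;> simp [hω, (he0 ω).le]

theorem integrable_mul_indicator_div_condExp [IsFiniteMeasure μ] (hm : m ≤ mΩ) {B : Set Ω}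
    (hB : MeasurableSet B) {e : Ω → ℝ} (he : Measurable[m] e) (he0 : ∀ ω, 0 < e ω)
    (heB : e =ᵐ[μ] μ[B.indicator 1 | m]) {W : Ω → ℝ} (hW : Measurable W) {C : ℝ}
    (hWC : ∀ ω, |W ω| ≤ C) :
    Integrable (fun ω => W ω * B.indicator 1 ω / e ω) μ := by
  refine ((integrable_indicator_inv_condExp hm hB he he0 heB).const_mul C).mono'
    ((hW.mul (measurable_const.indicator hB)).div (he.mono hm le_rfl)).aestronglyMeasurable
    (.of_forall fun ω => ?_)
  by_cases hω : ω ∈ B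
  · simpa [hω, abs_of_pos (he0 ω), div_eq_mul_inv] using
      mul_le_mul_of_nonneg_right (hWC ω) (inv_nonneg.2 (he0 ω).le)
  · simp [hω]

theorem integral_mul_indicator_div_condExp [IsFiniteMeasure μ] (hm : m ≤ mΩ) {B : Set Ω}
    (hB : MeasurableSet B) {e : Ω → ℝ} (he : Measurable[m] e) (he0 : ∀ ω, 0 < e ω)
    (heB : e =ᵐ[μ] μ[B.indicator 1 | m])
    {Z : Ω → ℝ} (hZ : Measurable Z) {C : ℝ} (hZC : ∀ ω, |Z ω| ≤ C)
    (hZB : μ[Z * B.indicator 1 | m] =ᵐ[μ] μ[Z | m] * μ[B.indicator 1 | m])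
    {φ : Ω → ℝ} (hφ : Measurable[m] φ) {D : ℝ} (hφD : ∀ ω, |φ ω| ≤ D) :
    Integrable (fun ω => φ ω * Z ω * B.indicator 1 ω / e ω) μ ∧
      ∫ ω, φ ω * Z ω * B.indicator 1 ω / e ω ∂μ = ∫ ω, φ ω * Z ω ∂μ := by
  have hZi : Integrable Z μ := .of_bound hZ.aestronglyMeasurable C (.of_forall hZC)
  have hZBi : Integrable (Z * B.indicator 1) μ :=
    hZi.mul_bdd (measurable_const.indicator hB).aestronglyMeasurable
      (.of_forall fun ω => (norm_indicator_le_norm_self _ ω).trans_eq norm_one)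
  have hφZi : Integrable (φ * Z) μ :=
    hZi.bdd_mul (hφ.mono hm le_rfl).aestronglyMeasurable (.of_forall hφD)
  have hint := integrable_mul_indicator_div_condExp hm hB he he0 heB
    ((hφ.mono hm le_rfl).mul hZ) (C := D * C) fun ω => by
      rw [Pi.mul_apply, abs_mul]
      exact mul_le_mul (hφD ω) (hZC ω) (abs_nonneg _) ((abs_nonneg _).trans (hφD ω))
  have hφe : StronglyMeasurable[m] (φ / e) := (hφ.div he).stronglyMeasurable
  have hφeZB : Integrable ((φ / e) * (Z * B.indicator 1)) μ :=
    hint.congr (.of_forall fun ω => by simp only [Pi.mul_apply, Pi.div_apply]; ring)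
  refine ⟨hint, ?_⟩
  calc ∫ ω, φ ω * Z ω * B.indicator 1 ω / e ω ∂μ
      = ∫ ω, μ[(φ / e) * (Z * B.indicator 1) | m] ω ∂μ := by
        rw [integral_condExp hm]
        congr 1 with ω
        simp only [Pi.mul_apply, Pi.div_apply]
        ring
    _ = ∫ ω, φ ω * μ[Z | m] ω ∂μ := by
        refine integral_congr_ae ?_
        filter_upwards [condExp_mul_of_stronglyMeasurable_left hφe hφeZB hZBi, hZB, heB]
          with ω h₁ h₂ h₃
        rw [h₁, Pi.mul_apply, h₂, Pi.mul_apply, Pi.div_apply, ← h₃]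
        field_simp [(he0 ω).ne']
    _ = ∫ ω, φ ω * Z ω ∂μ := by
        refine (integral_congr_ae ?_).trans (integral_condExp hm (f := φ * Z))
        filter_upwards [condExp_mul_of_stronglyMeasurable_left hφ.stronglyMeasurable hφZi hZi]
          with ω h
        rw [h]
        rfl

theorem condExp_indicator_compl [IsFiniteMeasure μ] (hm : m ≤ mΩ) {B : Set Ω}
    (hB : MeasurableSet B) :
    μ[Bᶜ.indicator (1 : Ω → ℝ) | m] =ᵐ[μ] 1 - μ[B.indicator 1 | m] := by
  rw [Set.indicator_compl]
  refine (condExp_sub (integrable_const (1 : ℝ))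
    ((integrable_const (1 : ℝ)).indicator hB) m).trans ?_
  rw [condExp_const hm]
  rfl

theorem eq_two_smul_indicator_sub_one {Z : Ω → ℝ} (hZ : ∀ ω, Z ω = 1 ∨ Z ω = -1) :
    Z = (2 : ℝ) • {ω | Z ω = 1}.indicator 1 - 1 := by
  ext ω
  rcases hZ ω with h | h <;> norm_num [Set.indicator_apply, h]

theorem ProbabilityTheory.CondIndepFun.condExp_sign_mul_indicator [StandardBorelSpace Ω] [IsFiniteMeasure μ]
    {β γ : Type*} [MeasurableSpace β] [MeasurableSpace γ] {hm : m ≤ mΩ} {W : Ω → β} {T : Ω → γ}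
    (hind : CondIndepFun m hm W T μ) (hW : Measurable W) (hT : Measurable T)
    {g : β → ℝ} (hg : Measurable g) (hgv : ∀ ω, g (W ω) = 1 ∨ g (W ω) = -1)
    {t : Set γ} (ht : MeasurableSet t) :
    μ[(fun ω => g (W ω)) * (T ⁻¹' t).indicator 1 | m] =ᵐ[μ]
      μ[fun ω => g (W ω) | m] * μ[(T ⁻¹' t).indicator 1 | m] := by
  set S := {ω | g (W ω) = 1}
  set B := T ⁻¹' t
  have hS : MeasurableSet S := hW (hg (measurableSet_singleton 1))
  have hSi : Integrable (S.indicator (1 : Ω → ℝ)) μ := (integrable_const 1).indicator hS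
  have hBi : Integrable (B.indicator (1 : Ω → ℝ)) μ := (integrable_const 1).indicator (hT ht)
  have hSBi : Integrable ((S ∩ B).indicator (1 : Ω → ℝ)) μ :=
    (integrable_const 1).indicator (hS.inter (hT ht))
  have hg_eq : (fun ω => g (W ω)) = (2 : ℝ) • S.indicator 1 - 1 :=
    eq_two_smul_indicator_sub_one hgv
  have hgB_eq : (fun ω => g (W ω)) * B.indicator 1
      = (2 : ℝ) • (S ∩ B).indicator 1 - B.indicator 1 := by
    rw [hg_eq, Set.inter_indicator_one]
    ext ω
    simp only [Pi.mul_apply, Pi.sub_apply, Pi.smul_apply, Pi.one_apply, smul_eq_mul]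
    ring
  have hSB : μ[(S ∩ B).indicator (1 : Ω → ℝ) | m]
      =ᵐ[μ] μ[S.indicator 1 | m] * μ[B.indicator 1 | m] := by
    exact (condIndepFun_iff_condExp_inter_preimage_eq_mul hW hT).1 hind _ _
      (hg (measurableSet_singleton 1)) ht
  have h_one : μ[(1 : Ω → ℝ) | m] = 1 := condExp_const (μ := μ) hm (1 : ℝ)
  rw [hgB_eq, hg_eq]
  filter_upwards [condExp_sub (hSBi.smul (2 : ℝ)) hBi m,
    condExp_sub (g := 1) (hSi.smul (2 : ℝ)) (integrable_const (1 : ℝ)) m,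
    condExp_smul (2 : ℝ) ((S ∩ B).indicator (1 : Ω → ℝ)) m,
    condExp_smul (2 : ℝ) (S.indicator (1 : Ω → ℝ)) m, hSB] with ω h₁ h₂ h₃ h₄ h₅
  simp only [Pi.sub_apply, Pi.mul_apply, Pi.smul_apply] at h₁ h₂ h₃ h₄ h₅ ⊢
  rw [h₁, h₂, h₃, h₄, h₅, h_one]
  simp only [Pi.one_apply, smul_eq_mul]
  ring

theorem abs_le_one_of_eq_one_or_eq_neg_one {x : ℝ} (hx : x = 1 ∨ x = -1) : |x| ≤ 1 := by
  rcases hx with rfl | rfl <;> simp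

theorem integrable_of_eq_one_or_eq_neg_one [IsFiniteMeasure μ] {Z : Ω → ℝ} (hZ : Measurable Z)
    (hZv : ∀ ω, Z ω = 1 ∨ Z ω = -1) : Integrable Z μ :=
  .of_bound hZ.aestronglyMeasurable 1
    (.of_forall fun ω => abs_le_one_of_eq_one_or_eq_neg_one (hZv ω))

theorem integral_ite_sign {φ Y₁ Y₂ : Ω → ℝ} (hφv : ∀ ω, φ ω = 1 ∨ φ ω = -1)
    (hY₁ : Integrable Y₁ μ) (hY₂ : Integrable Y₂ μ)
    (hφY₁ : Integrable (fun ω => φ ω * Y₁ ω) μ) (hφY₂ : Integrable (fun ω => φ ω * Y₂ ω) μ) :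
    ∫ ω, (if φ ω = 1 then Y₁ ω else Y₂ ω) ∂μ
      = (∫ ω, Y₁ ω + Y₂ ω ∂μ + ∫ ω, φ ω * Y₁ ω ∂μ - ∫ ω, φ ω * Y₂ ω ∂μ) / 2 := by
  have h : ∀ ω, (if φ ω = 1 then Y₁ ω else Y₂ ω)
      = (Y₁ ω + Y₂ ω + (φ ω * Y₁ ω - φ ω * Y₂ ω)) / 2 := fun ω => by
    rcases hφv ω with h | h
    · rw [h, if_pos rfl]; ring
    · rw [h, if_neg (by norm_num)]; ring
  simp_rw [h]
  rw [integral_div, integral_add (f := fun ω => Y₁ ω + Y₂ ω)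
      (g := fun ω => φ ω * Y₁ ω - φ ω * Y₂ ω) (hY₁.add hY₂) (hφY₁.sub hφY₂),
    integral_sub hφY₁ hφY₂, add_sub_assoc]

theorem measureReal_setOf_eq_one_of_sign [IsProbabilityMeasure μ] {φ : Ω → ℝ}
    (hφ : Measurable φ) (hφv : ∀ ω, φ ω = 1 ∨ φ ω = -1) :
    μ.real {ω | φ ω = 1} = (1 + ∫ ω, φ ω ∂μ) / 2 := by
  have h : {ω | φ ω = 1}.indicator 1 = fun ω => (1 + φ ω) / 2 := by
    ext ω
    rcases hφv ω with h | h <;> norm_num [Set.indicator_apply, h]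
  rw [← integral_indicator_one (s := {ω | φ ω = 1}) (hφ (measurableSet_singleton 1)), h,
    integral_div, integral_add (integrable_const 1) (integrable_of_eq_one_or_eq_neg_one hφ hφv)]
  simp

theorem integral_ipw_loss_eq {T e Q Y Y₁ Y₂ φ : Ω → ℝ} (θ : ℝ)
    (hTv : ∀ ω, T ω = 1 ∨ T ω = -1) (hQ : ∀ ω, Q ω = 1 / 2 + (e ω - 1 / 2) * T ω)
    (hY : ∀ ω, Y ω = if T ω = 1 then Y₁ ω else Y₂ ω) (hφ : Integrable φ μ)
    (h₁ : Integrable (fun ω => φ ω * Y₁ ω * {ω | T ω = 1}.indicator 1 ω / e ω) μ ∧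
      ∫ ω, φ ω * Y₁ ω * {ω | T ω = 1}.indicator 1 ω / e ω ∂μ = ∫ ω, φ ω * Y₁ ω ∂μ)
    (h₂ : Integrable (fun ω => φ ω * Y₂ ω * {ω | T ω = 1}ᶜ.indicator 1 ω / (1 - e ω)) μ ∧
      ∫ ω, φ ω * Y₂ ω * {ω | T ω = 1}ᶜ.indicator 1 ω / (1 - e ω) ∂μ = ∫ ω, φ ω * Y₂ ω ∂μ) :
    ∫ ω, φ ω * (2 * θ - Y ω * T ω / Q ω) ∂μ
      = 2 * θ * ∫ ω, φ ω ∂μ - ∫ ω, φ ω * Y₁ ω ∂μ + ∫ ω, φ ω * Y₂ ω ∂μ := by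
  have h : ∀ ω, φ ω * (2 * θ - Y ω * T ω / Q ω)
      = 2 * θ * φ ω - φ ω * Y₁ ω * {ω | T ω = 1}.indicator 1 ω / e ω
        + φ ω * Y₂ ω * {ω | T ω = 1}ᶜ.indicator 1 ω / (1 - e ω) := fun ω => by
    rcases hTv ω with hT | hT
    · have hQe : Q ω = e ω := by rw [hQ, hT]; ring
      simp [hY, hQe, hT]
      ring
    · have hQe : Q ω = 1 - e ω := by rw [hQ, hT]; ring
      norm_num [hY, hQe, hT]
      ring
  simp_rw [h]
  rw [integral_add (f := fun ω => 2 * θ * φ ω - φ ω * Y₁ ω * {ω | T ω = 1}.indicator 1 ω / e ω)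
      ((hφ.const_mul (2 * θ)).sub h₁.1) h₂.1,
    integral_sub (hφ.const_mul (2 * θ)) h₁.1, integral_const_mul, h₁.2, h₂.2]

end

theorem stmt_8_general {Ω : Type*} [MeasurableSpace Ω] [StandardBorelSpace Ω]
    (μ : Measure Ω) [IsProbabilityMeasure μ]
    {p : ℕ} (X : Ω → (Fin p → ℝ))
    (Yp Ym T : Ω → ℝ) (hYp : Measurable Yp) (hYm : Measurable Ym) (hT : Measurable T)
    (hYpv : ∀ ω, Yp ω = 1 ∨ Yp ω = -1) (hYmv : ∀ ω, Ym ω = 1 ∨ Ym ω = -1)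
    (hTv : ∀ ω, T ω = 1 ∨ T ω = -1)
    (hmX : MeasurableSpace.comap X inferInstance ≤ ‹MeasurableSpace Ω›)
    (unconf : CondIndepFun (MeasurableSpace.comap X inferInstance) hmX
      (fun ω => (Yp ω, Ym ω)) T μ)
    (eX : Ω → ℝ) (heXmeas : Measurable[MeasurableSpace.comap X inferInstance] eX)
    (heX : eX =ᵐ[μ] μ[{ω | T ω = 1}.indicator (fun _ => (1 : ℝ)) |
      MeasurableSpace.comap X inferInstance])
    (heXb : ∀ ω, 0 < eX ω ∧ eX ω < 1)
    (Q : Ω → ℝ) (hQ : ∀ ω, Q ω = 1 / 2 + (eX ω - 1 / 2) * T ω)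
    (Y : Ω → ℝ) (hY : ∀ ω, Y ω = if T ω = 1 then Yp ω else Ym ω)
    (f : (Fin p → ℝ) → ℝ) (hf : Measurable f) (hfv : ∀ x, f x = 1 ∨ f x = -1)
    (θ : ℝ) :
    (∫ ω, (if f (X ω) = 1 then Yp ω else Ym ω) ∂μ)
        - 2 * θ * (μ {ω | f (X ω) = 1}).toReal
      = (1 / 2) * (∫ ω, Yp ω + Ym ω ∂μ) - θ
        - (1 / 2) * ∫ ω, f (X ω) * (2 * θ - Y ω * T ω / Q ω) ∂μ := by
  set φ : Ω → ℝ := fun ω => f (X ω)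
  have hφm : Measurable[MeasurableSpace.comap X inferInstance] φ := hf.comp (comap_measurable X)
  have hφ : Measurable φ := hφm.mono hmX le_rfl
  have hφv : ∀ ω, φ ω = 1 ∨ φ ω = -1 := fun ω => hfv (X ω)
  have hφ1 := fun ω => abs_le_one_of_eq_one_or_eq_neg_one (hφv ω)
  have hW : Measurable fun ω => (Yp ω, Ym ω) := hYp.prodMk hYm
  have hA : MeasurableSet {ω | T ω = 1} := hT (measurableSet_singleton 1)
  have heXc : 1 - eX =ᵐ[μ] μ[{ω | T ω = 1}ᶜ.indicator 1 | MeasurableSpace.comap X inferInstance] :=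
    (Filter.EventuallyEq.rfl.sub heX).trans (condExp_indicator_compl hmX hA).symm
  have h₁ := integral_mul_indicator_div_condExp hmX hA heXmeas (fun ω => (heXb ω).1) heX hYp
    (fun ω => abs_le_one_of_eq_one_or_eq_neg_one (hYpv ω))
    (unconf.condExp_sign_mul_indicator hW hT measurable_fst hYpv (measurableSet_singleton 1))
    hφm hφ1
  have h₂ := integral_mul_indicator_div_condExp hmX hA.compl (measurable_const.sub heXmeas)
    (fun ω => sub_pos.2 (heXb ω).2) heXc hYm (fun ω => abs_le_one_of_eq_one_or_eq_neg_one (hYmv ω))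
    (unconf.condExp_sign_mul_indicator hW hT measurable_snd hYmv (measurableSet_singleton 1).compl)
    hφm hφ1
  have hYpi := integrable_of_eq_one_or_eq_neg_one (μ := μ) hYp hYpv
  have hYmi := integrable_of_eq_one_or_eq_neg_one (μ := μ) hYm hYmv
  rw [integral_ipw_loss_eq θ hTv hQ hY (integrable_of_eq_one_or_eq_neg_one hφ hφv) h₁ h₂,
    integral_ite_sign hφv hYpi hYmi (hYpi.bdd_mul hφ.aestronglyMeasurable (.of_forall hφ1))
      (hYmi.bdd_mul hφ.aestronglyMeasurable (.of_forall hφ1)),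
    ← measureReal_def, measureReal_setOf_eq_one_of_sign hφ hφv]
  ring

/-- Minimizing `L'_θ` is equivalent to maximizing the policy value `U_θ`:
`E[Y(f(X))] - 2θ·P(f(X)=1) = (1/2)E[Y(+1)+Y(-1)] - θ - (1/2)·L'_θ(f)`, where
`L'_θ(f) = E[f(X)(2θ - YT/Q)]`. Monotonicity is NOT assumed. -/
theorem stmt_8 {Ω : Type*} [MeasurableSpace Ω] [StandardBorelSpace Ω]
    (μ : Measure Ω) [IsProbabilityMeasure μ]
    {p : ℕ} (X : Ω → (Fin p → ℝ)) (hX : Measurable X)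
    (Yp Ym T : Ω → ℝ) (hYp : Measurable Yp) (hYm : Measurable Ym) (hT : Measurable T)
    (hYpv : ∀ ω, Yp ω = 1 ∨ Yp ω = -1) (hYmv : ∀ ω, Ym ω = 1 ∨ Ym ω = -1)
    (hTv : ∀ ω, T ω = 1 ∨ T ω = -1)
    (hmX : MeasurableSpace.comap X inferInstance ≤ ‹MeasurableSpace Ω›)
    (unconf : CondIndepFun (MeasurableSpace.comap X inferInstance) hmX
      (fun ω => (Yp ω, Ym ω)) T μ)
    (eX : Ω → ℝ) (heXmeas : Measurable[MeasurableSpace.comap X inferInstance] eX)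
    (heX : eX =ᵐ[μ] μ[{ω | T ω = 1}.indicator (fun _ => (1 : ℝ)) |
      MeasurableSpace.comap X inferInstance])
    (heXb : ∀ ω, 0 < eX ω ∧ eX ω < 1)
    (Q : Ω → ℝ) (hQ : ∀ ω, Q ω = 1 / 2 + (eX ω - 1 / 2) * T ω)
    (Y : Ω → ℝ) (hY : ∀ ω, Y ω = if T ω = 1 then Yp ω else Ym ω)
    (f : (Fin p → ℝ) → ℝ) (hf : Measurable f) (hfv : ∀ x, f x = 1 ∨ f x = -1)
    (θ : ℝ) (hθ : 0 ≤ θ ∧ θ ≤ 1) :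
    (∫ ω, (if f (X ω) = 1 then Yp ω else Ym ω) ∂μ)
        - 2 * θ * (μ {ω | f (X ω) = 1}).toReal
      = (1 / 2) * (∫ ω, Yp ω + Ym ω ∂μ) - θ
        - (1 / 2) * ∫ ω, f (X ω) * (2 * θ - Y ω * T ω / Q ω) ∂μ :=
  stmt_8_general μ X Yp Ym T hYp hYm hT hYpv hYmv hTv hmX unconf eX heXmeas heX heXb Q hQ Y hY f hf
    hfv θ
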